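/- Let α_{n,k} = (+1,…,+1,−1,…,−1) with k entries +1 followed by n−k entries −1. Then the set of (α_{n,k},α_{n,k}|α_{n,k},α_{n,k})-ASMs is exactly the set of n×n matrices of the form (−A₁) ⊕ A₂ (block diagonal direct sum), where A₁ is a k×k ordinary ASM and A₂ is an (n−k)×(n−k) ordinary ASM. -/

import Mathlib

/-- The nonzero entries of a list of integers alternate in sign. -/
def AltList (l : List ℤ) : Prop :=
  List.Chain' (fun x y => x * y = -1) (l.filter (· ≠ 0))

/-- A vector of ±1s. -/
def SignVec {p : ℕ} (w : Fin p → ℤ) : Prop := ∀ i, w i = 1 ∨ w i = -1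

/-- `A` is a (u,u'|v,v')-ASM: a (0,±1)-matrix such that in the bordered matrix
(u on top, u' on bottom, v on the left, v' on the right, zeros in corners)
the nonzero entries of each interior row and column alternate in sign. -/
def IsGASM {m n : ℕ} (u u' : Fin n → ℤ) (v v' : Fin m → ℤ)
    (A : Matrix (Fin m) (Fin n) ℤ) : Prop :=
  (∀ i j, A i j = 0 ∨ A i j = 1 ∨ A i j = -1) ∧
  (∀ i : Fin m, AltList (v i :: (List.ofFn fun j => A i j) ++ [v' i])) ∧
  (∀ j : Fin n, AltList (u j :: (List.ofFn fun i => A i j) ++ [u' j]))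

/-- Ordinary alternating sign matrix, via the bordered formulation with all borders −1. -/
def IsASM {n : ℕ} (A : Matrix (Fin n) (Fin n) ℤ) : Prop :=
  IsGASM (fun _ => -1) (fun _ => -1) (fun _ => -1) (fun _ => -1) A

/-- The vector with k entries +1 followed by n−k entries −1. -/
def alphaVec (n k : ℕ) : Fin n → ℤ := fun j => if (j : ℕ) < k then 1 else -1

/-! In an alternating list starting with `s = ±1` the sum is `s` or `0`. Hence in a row of `A`
below the `k`-th one (left border `-1`) every initial segment has sum `≥ 0`, and in a column
left of the `k`-th one (bottom border `+1`) the entries below row `k` have sum `≤ 0`. Summing the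
first `c` columns of the lower-left block by rows and by columns, every row prefix of that block
vanishes, so the block is zero; transposing gives the upper-right block. For a block diagonal
matrix the bordered rows and columns are those of the blocks padded by zeros, and negating the
upper-left block turns its `+1` borders into `-1`. -/

namespace AltList

theorem iff_isChain {l : List ℤ} :
    AltList l ↔ (l.filter (· ≠ 0)).IsChain (fun x y => x * y = -1) := Iff.rfl

theorem iff_of_filter_eq {l₁ l₂ : List ℤ} (h : l₁.filter (· ≠ 0) = l₂.filter (· ≠ 0)) :
    AltList l₁ ↔ AltList l₂ := by
  rw [iff_isChain, iff_isChain, h]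

theorem of_prefix {l₁ l₂ : List ℤ} (h : l₁ <+: l₂) (hl₂ : AltList l₂) : AltList l₁ :=
  List.IsChain.prefix hl₂ (h.filter _)

theorem reverse_iff {l : List ℤ} : AltList l.reverse ↔ AltList l := by
  simp only [iff_isChain, List.filter_reverse, List.isChain_reverse, mul_comm]

theorem map_neg_iff {l : List ℤ} : AltList (l.map (-·)) ↔ AltList l := by
  simp [iff_isChain, List.filter_map, Function.comp_def, List.isChain_map]

theorem neg_bordered_iff {p : ℕ} {f : Fin p → ℤ} {x y : ℤ} :
    AltList (-x :: List.ofFn (fun j => -f j) ++ [-y]) ↔ AltList (x :: List.ofFn f ++ [y]) := by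
  rw [← map_neg_iff]
  simp [List.map_ofFn, Function.comp_def]

theorem append_replicate_zero_iff {l : List ℤ} {r : ℕ} {x y : ℤ} :
    AltList (x :: (l ++ List.replicate r 0) ++ [y]) ↔ AltList (x :: l ++ [y]) :=
  iff_of_filter_eq (by simp [List.filter_cons, List.filter_append])

theorem replicate_zero_append_iff {l : List ℤ} {r : ℕ} {x y : ℤ} :
    AltList (x :: (List.replicate r 0 ++ l) ++ [y]) ↔ AltList (x :: l ++ [y]) :=
  iff_of_filter_eq (by simp [List.filter_cons, List.filter_append])

theorem sum_cons_eq {s : ℤ} {l : List ℤ} (hs : s = 1 ∨ s = -1) (h : AltList (s :: l)) :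
    (s :: l).sum = s ∨ (s :: l).sum = 0 := by
  induction l generalizing s with
  | nil => simp
  | cons x t ih =>
    by_cases hx : x = 0
    · subst hx
      simpa using ih hs ((iff_of_filter_eq (by simp [List.filter_cons])).mp h)
    · have hs0 : s ≠ 0 := by omega
      rw [iff_isChain, List.filter_cons_of_pos (by simpa using hs0),
        List.filter_cons_of_pos (by simpa using hx), List.isChain_cons_cons] at h
      have hxs : x = -s := by rcases hs with rfl | rfl <;> linarith [h.1]
      have := ih (by omega) (show AltList (x :: t) by
        rw [iff_isChain, List.filter_cons_of_pos (by simpa using hx)]; exact h.2)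
      simp only [List.sum_cons] at this ⊢
      omega

end AltList

theorem List.ofFn_eq_ofFn_castAdd_append_ofFn_natAdd {α : Type*} {k m : ℕ} (f : Fin (k + m) → α) :
    List.ofFn f = List.ofFn (fun i => f (Fin.castAdd m i)) ++ List.ofFn (fun i => f (Fin.natAdd k i)) :=
  List.ofFn_add

theorem Matrix.eq_zero_of_sum_take_row_nonneg_of_sum_col_nonpos {m p : ℕ}
    (B : Matrix (Fin m) (Fin p) ℤ) (hrow : ∀ i c, 0 ≤ ((List.ofFn (B i)).take c).sum)
    (hcol : ∀ j, ∑ i, B i j ≤ 0) : B = 0 := by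
  have hprefix : ∀ i c, ((List.ofFn (B i)).take c).sum = 0 := by
    intro i c
    have htotal : ∑ i, ((List.ofFn (B i)).take c).sum ≤ 0 := calc
      ∑ i, ((List.ofFn (B i)).take c).sum = ∑ i, ∑ j with j.val < c, B i j := by
        simp only [List.sum_take_ofFn]
      _ = ∑ j with j.val < c, ∑ i, B i j := Finset.sum_comm
      _ ≤ 0 := Finset.sum_nonpos fun j _ => hcol j
    have hzero := (Finset.sum_eq_zero_iff_of_nonneg fun i _ => hrow i c).mp
      (le_antisymm htotal (Finset.sum_nonneg fun i _ => hrow i c))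
    exact hzero i (Finset.mem_univ i)
  ext i j
  simpa [hprefix] using (List.sum_take_succ (List.ofFn (B i)) j (by simp)).symm

namespace IsGASM

variable {m n : ℕ} {u u' : Fin n → ℤ} {v v' : Fin m → ℤ} {A : Matrix (Fin m) (Fin n) ℤ}

theorem transpose (hA : IsGASM u u' v v' A) : IsGASM v v' u u' A.transpose :=
  ⟨fun i j => hA.1 j i, hA.2.2, hA.2.1⟩

theorem neg_iff : IsGASM (-u) (-u') (-v) (-v') (-A) ↔ IsGASM u u' v v' A := by
  simp only [IsGASM, Pi.neg_apply, Matrix.neg_apply, AltList.neg_bordered_iff]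
  refine and_congr (forall₂_congr fun i j => ?_) Iff.rfl
  omega

end IsGASM

theorem IsGASM.apply_natAdd_castAdd_eq_zero {k m l p : ℕ} {u u' : Fin (l + p) → ℤ}
    {v v' : Fin (k + m) → ℤ} {A : Matrix (Fin (k + m)) (Fin (l + p)) ℤ}
    (hA : IsGASM u u' v v' A) (hv : ∀ i, v (Fin.natAdd k i) = -1)
    (hu' : ∀ j, u' (Fin.castAdd p j) = 1) (i : Fin m) (j : Fin l) :
    A (Fin.natAdd k i) (Fin.castAdd p j) = 0 := by
  let B : Matrix (Fin m) (Fin l) ℤ := fun i j => A (Fin.natAdd k i) (Fin.castAdd p j)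
  suffices B = 0 from congrFun (congrFun this i) j
  refine Matrix.eq_zero_of_sum_take_row_nonneg_of_sum_col_nonpos B (fun i c => ?_) (fun j => ?_)
  · have hrow := hA.2.1 (Fin.natAdd k i)
    rw [hv, List.ofFn_eq_ofFn_castAdd_append_ofFn_natAdd] at hrow
    have hpre : AltList (-1 :: (List.ofFn (B i)).take c) := hrow.of_prefix <| by
      simp only [List.cons_append, List.cons_prefix_cons, true_and, List.append_assoc]
      exact (List.take_prefix c _).trans (List.prefix_append _ _)
    have := hpre.sum_cons_eq (Or.inr rfl)
    simp only [List.sum_cons] at this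
    omega
  · have hcol := AltList.reverse_iff.mpr (hA.2.2 (Fin.castAdd p j))
    rw [hu', List.ofFn_eq_ofFn_castAdd_append_ofFn_natAdd] at hcol
    have hpre : AltList (1 :: (List.ofFn fun i => B i j).reverse) := hcol.of_prefix <| by
      simp only [List.reverse_append, List.reverse_cons, List.singleton_append, List.append_assoc]
      exact List.prefix_append _ _
    have := hpre.sum_cons_eq (Or.inl rfl)
    simp only [List.sum_cons, List.sum_reverse, List.sum_ofFn] at this
    omega

theorem isGASM_reindex_fromBlocks_zero_zero_iff {k l m p : ℕ} {u₁ u₁' : Fin l → ℤ}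
    {u₂ u₂' : Fin p → ℤ} {v₁ v₁' : Fin k → ℤ} {v₂ v₂' : Fin m → ℤ}
    {B₁ : Matrix (Fin k) (Fin l) ℤ} {B₂ : Matrix (Fin m) (Fin p) ℤ} :
    IsGASM (Fin.append u₁ u₂) (Fin.append u₁' u₂') (Fin.append v₁ v₂) (Fin.append v₁' v₂')
        (Matrix.reindex finSumFinEquiv finSumFinEquiv (Matrix.fromBlocks B₁ 0 0 B₂)) ↔
      IsGASM u₁ u₁' v₁ v₁' B₁ ∧ IsGASM u₂ u₂' v₂ v₂' B₂ := by
  simp only [IsGASM, Fin.forall_fin_add, List.ofFn_eq_ofFn_castAdd_append_ofFn_natAdd,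
    Matrix.reindex_apply, Matrix.submatrix_apply, finSumFinEquiv_symm_apply_castAdd,
    finSumFinEquiv_symm_apply_natAdd, Matrix.fromBlocks_apply₁₁, Matrix.fromBlocks_apply₁₂,
    Matrix.fromBlocks_apply₂₁, Matrix.fromBlocks_apply₂₂, Matrix.zero_apply, Fin.append_left,
    Fin.append_right, List.ofFn_const, AltList.append_replicate_zero_iff,
    AltList.replicate_zero_append_iff]
  simp only [zero_ne_one, zero_eq_neg, one_ne_zero, or_false, implies_true, and_true, true_and]
  tauto

theorem isASM_neg_iff {n : ℕ} {A : Matrix (Fin n) (Fin n) ℤ} :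
    IsASM (-A) ↔ IsGASM (fun _ => 1) (fun _ => 1) (fun _ => 1) (fun _ => 1) A :=
  IsGASM.neg_iff

theorem alphaVec_add (k m : ℕ) :
    alphaVec (k + m) k = Fin.append (fun _ => 1) (fun _ => -1) := by
  ext i
  refine Fin.addCases (fun a => ?_) (fun b => ?_) i <;> simp [alphaVec]

theorem isGASM_alphaVec_iff {k m n : ℕ} (h : k + m = n) (A : Matrix (Fin n) (Fin n) ℤ) :
    IsGASM (alphaVec n k) (alphaVec n k) (alphaVec n k) (alphaVec n k) A ↔
    ∃ (A₁ : Matrix (Fin k) (Fin k) ℤ) (A₂ : Matrix (Fin m) (Fin m) ℤ),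
      IsASM A₁ ∧ IsASM A₂ ∧
      A = Matrix.reindex (finSumFinEquiv.trans (finCongr h)) (finSumFinEquiv.trans (finCongr h))
            (Matrix.fromBlocks (-A₁) 0 0 A₂) := by
  subst h
  simp only [finCongr_refl, Equiv.trans_refl, alphaVec_add]
  constructor
  · intro hA
    set M := Matrix.reindex finSumFinEquiv.symm finSumFinEquiv.symm A
    have hM : A = Matrix.reindex finSumFinEquiv finSumFinEquiv
        (Matrix.fromBlocks M.toBlocks₁₁ M.toBlocks₁₂ M.toBlocks₂₁ M.toBlocks₂₂) := by
      simp [M, Matrix.fromBlocks_toBlocks]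
    have h₂₁ : M.toBlocks₂₁ = 0 := by
      ext i j
      exact hA.apply_natAdd_castAdd_eq_zero (by simp) (by simp) i j
    have h₁₂ : M.toBlocks₁₂ = 0 := by
      ext i j
      exact hA.transpose.apply_natAdd_castAdd_eq_zero (by simp) (by simp) j i
    rw [h₂₁, h₁₂] at hM
    rw [hM, isGASM_reindex_fromBlocks_zero_zero_iff] at hA
    exact ⟨-M.toBlocks₁₁, M.toBlocks₂₂, isASM_neg_iff.mpr hA.1, hA.2, by rwa [neg_neg]⟩
  · rintro ⟨A₁, A₂, h₁, h₂, rfl⟩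
    rw [isGASM_reindex_fromBlocks_zero_zero_iff]
    exact ⟨isASM_neg_iff.mp (by rwa [neg_neg]), h₂⟩

theorem stmt11 {n k : ℕ} (hk : k ≤ n) (A : Matrix (Fin n) (Fin n) ℤ) :
    IsGASM (alphaVec n k) (alphaVec n k) (alphaVec n k) (alphaVec n k) A ↔
    ∃ (A₁ : Matrix (Fin k) (Fin k) ℤ) (A₂ : Matrix (Fin (n - k)) (Fin (n - k)) ℤ),
      IsASM A₁ ∧ IsASM A₂ ∧
      A = Matrix.reindex (finSumFinEquiv.trans (finCongr (Nat.add_sub_cancel' hk))) (finSumFinEquiv.trans (finCongr (Nat.add_sub_cancel' hk)))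
            (Matrix.fromBlocks (-A₁) 0 0 A₂) :=
  isGASM_alphaVec_iff (Nat.add_sub_cancel' hk) A
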